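/- arXiv:2208.09179 — 2 statements merged into one kernel-verified Lean document; each statement's English description precedes it below -/
import Mathlib

section
/- If a linear switched system (Σ_𝓜), associated with a bounded set 𝓜 of n×n real matrices, admits a nonstrict common Lyapunov function, then (Σ_𝓜) is uniformly stable. -/
open MeasureTheory Set
open scoped RealInnerProductSpace

noncomputable section

attribute [local instance] Matrix.normedAddCommGroup Matrix.normedSpace

local instance matrixMeasurableSpace {n : ℕ} :
    MeasurableSpace (Matrix (Fin n) (Fin n) ℝ) :=
  inferInstanceAs (MeasurableSpace (Fin n → Fin n → ℝ))

/-- The space of `n × n` real matrices. -/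
abbrev Mat (n : ℕ) := Matrix (Fin n) (Fin n) ℝ

/-- The state space `ℝⁿ` with its Euclidean structure. -/
abbrev Vec (n : ℕ) := EuclideanSpace ℝ (Fin n)

/-- Action of a matrix on a vector of Euclidean space. -/
def Mat.act {n : ℕ} (M : Mat n) (x : Vec n) : Vec n := Matrix.toEuclideanLin M x

/-- A switching law for the switched system `(Σ_𝓜)`: a measurable function taking values in `𝓜`. -/
def IsSwitchingLaw {n : ℕ} (𝓜 : Set (Mat n)) (A : ℝ → Mat n) : Prop :=
  Measurable A ∧ ∀ t, 0 ≤ t → A t ∈ 𝓜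

/-- `Φ` is the fundamental matrix `t ↦ Φ_A(t,0)` of the switching law `A`: the continuous
solution on `[0,∞)` of `Φ(t) = Id + ∫₀ᵗ A(s) Φ(s) ds`. -/
def IsFundamentalMatrix {n : ℕ} (A : ℝ → Mat n) (Φ : ℝ → Mat n) : Prop :=
  ContinuousOn Φ (Ici (0:ℝ)) ∧
  ∀ t, 0 ≤ t → Φ t = 1 + ∫ s in (0:ℝ)..t, A s * Φ s

/-- Uniform stability of the switched system `(Σ_𝓜)`. -/
def UniformlyStable {n : ℕ} (𝓜 : Set (Mat n)) : Prop :=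
  ∃ C > 0, ∀ A Φ : ℝ → Mat n, IsSwitchingLaw 𝓜 A → IsFundamentalMatrix A Φ →
    ∀ t, 0 ≤ t → ‖Φ t‖ ≤ C

/-- Uniform exponential stability of the switched system `(Σ_𝓜)`. -/
def UniformlyExpStable {n : ℕ} (𝓜 : Set (Mat n)) : Prop :=
  ∃ C > 0, ∃ γ > 0, ∀ A Φ : ℝ → Mat n, IsSwitchingLaw 𝓜 A → IsFundamentalMatrix A Φ →
    ∀ t, 0 ≤ t → ‖Φ t‖ ≤ C * Real.exp (-γ * t)

/-- A nonstrict common Lyapunov function for `(Σ_𝓜)`: continuous, nonnegative, positive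
definite, and non-increasing along every trajectory. -/
def IsNonstrictCLF {n : ℕ} (𝓜 : Set (Mat n)) (V : Vec n → ℝ) : Prop :=
  Continuous V ∧ (∀ x, 0 ≤ V x) ∧ V 0 = 0 ∧ (∀ x, x ≠ 0 → 0 < V x) ∧
  ∀ A Φ : ℝ → Mat n, IsSwitchingLaw 𝓜 A → IsFundamentalMatrix A Φ → ∀ x₀ : Vec n,
    AntitoneOn (fun t => V ((Φ t).act x₀)) (Ici 0)

/-- A (strict) common Lyapunov function for `(Σ_𝓜)`: a nonstrict one that is moreover
strictly decreasing along every nonzero trajectory. -/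
def IsCLF {n : ℕ} (𝓜 : Set (Mat n)) (V : Vec n → ℝ) : Prop :=
  IsNonstrictCLF 𝓜 V ∧
  ∀ A Φ : ℝ → Mat n, IsSwitchingLaw 𝓜 A → IsFundamentalMatrix A Φ → ∀ x₀ : Vec n, x₀ ≠ 0 →
    StrictAntiOn (fun t => V ((Φ t).act x₀)) (Ici 0)

/-- A universal class of Lyapunov functions. -/
def IsUniversalClass {n : ℕ} (P : Set (Vec n → ℝ)) : Prop :=
  ∀ 𝓜 : Set (Mat n), Bornology.IsBounded 𝓜 → UniformlyExpStable 𝓜 →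
    ∃ V ∈ P, IsCLF 𝓜 V

/-- `V` is absolutely homogeneous of degree `α`. -/
def AbsHomog {n : ℕ} (α : ℝ) (V : Vec n → ℝ) : Prop :=
  ∀ (lam : ℝ) (x : Vec n), V (lam • x) = |lam| ^ α * V x

/-- The subdifferential of a convex function. -/
def subdiff {n : ℕ} (V : Vec n → ℝ) (x : Vec n) : Set (Vec n) :=
  {l | ∀ y, ⟪l, y - x⟫ ≤ V y - V x}

/-!
Positive definiteness and compactness of a sphere give `V ≥ m > 0` on the sphere of radius `ε`,
while continuity gives `V < m` on a small ball of radius `δ`. A trajectory starting in that ball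
would have to cross the sphere to leave the `ε`-ball (intermediate value theorem), but `V` does
not increase along it. For the switched system, linearity then turns "every trajectory from the
`δ`-ball stays in the unit ball" into a bound `1 / δ` on the fundamental matrix.
-/

theorem exists_pos_norm_lt_of_norm_le_of_antitoneOn {E : Type*} [NormedAddCommGroup E]
    [ProperSpace E] {V : E → ℝ} (hVc : Continuous V) (hV : ∀ x ≠ 0, V 0 < V x)
    {ε : ℝ} (hε : 0 < ε) :
    ∃ δ > 0, ∀ γ : ℝ → E, ContinuousOn γ (Ici 0) → AntitoneOn (V ∘ γ) (Ici 0) →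
      ‖γ 0‖ ≤ δ → ∀ t, 0 ≤ t → ‖γ t‖ < ε := by
  obtain ⟨m, hm0, hm⟩ := (isCompact_sphere (0 : E) ε).exists_forall_le' hVc.continuousOn
    fun x hx => hV x (Metric.ne_of_mem_sphere hx hε.ne')
  have hsmall : ∀ᶠ x in nhds (0 : E), V x < m ∧ x ∈ Metric.ball 0 ε :=
    (hVc.continuousAt.eventually (gt_mem_nhds hm0)).and (Metric.ball_mem_nhds 0 hε)
  obtain ⟨δ, hδ, hball⟩ := Metric.nhds_basis_closedBall.eventually_iff.mp hsmall
  refine ⟨δ, hδ, fun γ hγc hγV hγ0 t ht => ?_⟩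
  obtain ⟨hVγ0, hnormγ0⟩ := hball (mem_closedBall_zero_iff.mpr hγ0)
  by_contra! hlarge
  obtain ⟨s, hs, hγs⟩ := intermediate_value_Icc ht ((hγc.mono Icc_subset_Ici_self).norm)
    ⟨(mem_ball_zero_iff.mp hnormγ0).le, hlarge⟩
  have hVs : m ≤ V (γ s) := hm _ (mem_sphere_zero_iff_norm.mpr hγs)
  have hdecr : V (γ s) ≤ V (γ 0) := hγV self_mem_Ici (mem_Ici.mpr hs.1) hs.1
  linarith

namespace Mat

variable {n : ℕ}

lemma continuous_act (x : Vec n) : Continuous fun M : Mat n => M.act x :=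
  (LinearMap.applyₗ x ∘ₗ
    (Matrix.toEuclideanLin : Mat n ≃ₗ[ℝ] _).toLinearMap).continuous_of_finiteDimensional

@[simp]
lemma one_act (x : Vec n) : (1 : Mat n).act x = x := by
  rw [Mat.act, Matrix.toLpLin_apply, Matrix.one_mulVec]

lemma norm_le_of_forall_norm_act_le (M : Mat n) {δ C : ℝ} (hδ : 0 < δ) (hC : 0 ≤ C)
    (h : ∀ x : Vec n, ‖x‖ = δ → ‖M.act x‖ ≤ C) : ‖M‖ ≤ C / δ := by
  refine (Matrix.norm_le_iff (div_nonneg hC hδ.le)).mpr fun i j => ?_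
  set x : Vec n := δ • EuclideanSpace.single j 1
  have hx : ‖x‖ = δ := by simp [x, norm_smul, abs_of_pos hδ]
  have hentry : M.act x i = δ * M i j := by
    simp [x, Mat.act, Matrix.toLpLin_apply, Matrix.mulVec_single]
  rw [le_div_iff₀ hδ, mul_comm]
  calc δ * ‖M i j‖ = ‖M.act x i‖ := by rw [hentry, norm_mul, Real.norm_of_nonneg hδ.le]
    _ ≤ ‖M.act x‖ := PiLp.norm_apply_le _ i
    _ ≤ C := h x hx

end Mat

namespace IsFundamentalMatrix

variable {n : ℕ} {A Φ : ℝ → Mat n}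

lemma apply_zero (hΦ : IsFundamentalMatrix A Φ) : Φ 0 = 1 := by
  simpa using hΦ.2 0 le_rfl

lemma continuousOn_act (hΦ : IsFundamentalMatrix A Φ) (x : Vec n) :
    ContinuousOn (fun t => (Φ t).act x) (Ici 0) :=
  (Mat.continuous_act x).comp_continuousOn hΦ.1

end IsFundamentalMatrix

theorem uniformlyStable_of_nonstrictCLF_general {n : ℕ}
    (M : Set (Mat n))
    (V : Vec n → ℝ) (hV : IsNonstrictCLF M V) :
    UniformlyStable M := by
  obtain ⟨hVc, -, hV0, hVpos, hV_anti⟩ := hV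
  obtain ⟨δ, hδ, hstable⟩ :=
    exists_pos_norm_lt_of_norm_le_of_antitoneOn hVc (fun x hx => hV0 ▸ hVpos x hx) one_pos
  refine ⟨1 / δ, by positivity, fun A Φ hA hΦ t ht => ?_⟩
  refine (Φ t).norm_le_of_forall_norm_act_le hδ zero_le_one fun x hx => ?_
  refine (hstable _ (hΦ.continuousOn_act x) (hV_anti A Φ hA hΦ x) ?_ t ht).le
  simp [hΦ.apply_zero, hx]

/-- If a linear switched system `(Σ_𝓜)`, associated with a bounded set `𝓜`
of `n × n` real matrices, admits a nonstrict common Lyapunov function, then `(Σ_𝓜)` is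
uniformly stable. -/
theorem uniformlyStable_of_nonstrictCLF {n : ℕ} (hn : 1 ≤ n)
    (M : Set (Mat n)) (hM : Bornology.IsBounded M)
    (V : Vec n → ℝ) (hV : IsNonstrictCLF M V) :
    UniformlyStable M :=
  uniformlyStable_of_nonstrictCLF_general M V hV

end
end

section
/- Let V: ℝⁿ → [0,∞) be convex and absolutely homogeneous of degree one, let (x_i)_{i∈ℕ} be a dense sequence in the unit sphere S^{n−1}, and for each i let l_i ∈ ∂V(x_i). Define W_i(x) = max_{j=1,…,i} |l_jᵀ x|. Then W_i(x) ≤ V(x) for all x ∈ ℝⁿ and all i, and the sequence (W_i) converges to V uniformly on S^{n−1}. -/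
open MeasureTheory Set
open scoped RealInnerProductSpace

noncomputable section

attribute [local instance] Matrix.normedAddCommGroup Matrix.normedSpace

/-!
A subgradient `l` of the seminorm `V` at `x` satisfies `⟪l, x⟫ = V x` and `|⟪l, ·⟫| ≤ V`, so
each `W_i` lies below `V`. Moreover `V y - ⟪l, y⟫ ≤ 2 V (y - x)`, so `W_i` is within
`2 V (y - x_j)` of `V` at `y` as soon as `j ≤ i`. Since `V` is continuous and vanishes at `0`,
and finitely many `x_j` are `δ`-dense in the compact sphere, the convergence is uniform.
-/

lemma absHomog_one_iff {n : ℕ} {V : Vec n → ℝ} :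
    AbsHomog 1 V ↔ ∀ (c : ℝ) (y : Vec n), V (c • y) = |c| * V y := by
  simp only [AbsHomog, Real.rpow_one]

section Seminorm

variable {E : Type*} [NormedAddCommGroup E] [InnerProductSpace ℝ E] {V : E → ℝ} {l x : E}

lemma ConvexOn.map_add_le_of_abs_smul (hconv : ConvexOn ℝ univ V)
    (hV : ∀ (c : ℝ) (y : E), V (c • y) = |c| * V y) (a b : E) : V (a + b) ≤ V a + V b := by
  have h := hconv.2 (mem_univ a) (mem_univ b) (by norm_num : (0:ℝ) ≤ 1/2)
    (by norm_num : (0:ℝ) ≤ 1/2) (by norm_num)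
  rw [← smul_add, hV, smul_eq_mul, smul_eq_mul] at h
  norm_num at h
  linarith

lemma inner_eq_of_subgradient (hV : ∀ (c : ℝ) (y : E), V (c • y) = |c| * V y)
    (hl : ∀ y, ⟪l, y - x⟫ ≤ V y - V x) : ⟪l, x⟫ = V x := by
  have h0 := hl 0
  have h2 := hl ((2:ℝ) • x)
  rw [zero_sub, inner_neg_right, ← zero_smul ℝ (0 : E), hV] at h0
  rw [two_smul, add_sub_cancel_right, ← two_smul ℝ, hV] at h2
  norm_num at h0 h2
  linarith

lemma abs_inner_le_of_subgradient (hV : ∀ (c : ℝ) (y : E), V (c • y) = |c| * V y)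
    (hl : ∀ y, ⟪l, y - x⟫ ≤ V y - V x) (y : E) : |⟪l, y⟫| ≤ V y := by
  have hx := inner_eq_of_subgradient hV hl
  have hpos := hl y
  have hneg := hl (-y)
  rw [inner_sub_right, hx] at hpos hneg
  rw [inner_neg_right, ← neg_one_smul ℝ y, hV] at hneg
  norm_num at hneg
  exact abs_le.mpr ⟨by linarith, by linarith⟩

lemma sub_inner_le_of_subgradient (hconv : ConvexOn ℝ univ V)
    (hV : ∀ (c : ℝ) (y : E), V (c • y) = |c| * V y)
    (hl : ∀ y, ⟪l, y - x⟫ ≤ V y - V x) (y : E) : V y - ⟪l, y⟫ ≤ 2 * V (y - x) := by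
  have hsplit : ⟪l, y⟫ = V x + ⟪l, y - x⟫ := by
    rw [inner_sub_right, inner_eq_of_subgradient hV hl]; ring
  have hlower := neg_abs_le ⟪l, y - x⟫
  have habs := abs_inner_le_of_subgradient hV hl (y - x)
  have htri := hconv.map_add_le_of_abs_smul hV x (y - x)
  rw [add_sub_cancel] at htri
  linarith

end Seminorm

lemma IsCompact.exists_bound_dist_lt_of_subset_closure_range {X : Type*}
    [PseudoMetricSpace X] {K : Set X} (hK : IsCompact K) {x : ℕ → X}
    (hx : K ⊆ closure (range x)) {δ : ℝ} (hδ : 0 < δ) :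
    ∃ N, ∀ y ∈ K, ∃ j ≤ N, dist y (x j) < δ := by
  have hcover : K ⊆ ⋃ j, Metric.ball (x j) δ := fun y hy => by
    obtain ⟨_, ⟨j, rfl⟩, hj⟩ := Metric.mem_closure_iff.mp (hx hy) δ hδ
    exact mem_iUnion.mpr ⟨j, hj⟩
  obtain ⟨J, hJ⟩ := hK.elim_finite_subcover _ (fun _ => Metric.isOpen_ball) hcover
  refine ⟨J.sup id, fun y hy => ?_⟩
  obtain ⟨j, hj, hyj⟩ := mem_iUnion₂.mp (hJ hy)
  exact ⟨j, Finset.le_sup (f := id) hj, hyj⟩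

lemma tendstoUniformlyOn_sup'_range {X : Type*} [PseudoMetricSpace X] {K : Set X}
    (hK : IsCompact K) {x : ℕ → X} (hx : K ⊆ closure (range x)) {f : ℕ → X → ℝ}
    {g : X → ℝ} (hle : ∀ j, ∀ y ∈ K, f j y ≤ g y)
    (hclose : ∀ ε > 0, ∃ δ > 0, ∀ j, ∀ y ∈ K, dist y (x j) < δ → g y - f j y < ε) :
    TendstoUniformlyOn (fun i y => (Finset.range (i + 1)).sup' Finset.nonempty_range_add_one
      fun j => f j y) g Filter.atTop K := by
  rw [Metric.tendstoUniformlyOn_iff]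
  intro ε hε
  obtain ⟨δ, hδ, hfδ⟩ := hclose ε hε
  obtain ⟨N, hN⟩ := hK.exists_bound_dist_lt_of_subset_closure_range hx hδ
  filter_upwards [Filter.eventually_ge_atTop N] with i hi y hy
  obtain ⟨j, hjN, hyj⟩ := hN y hy
  have hj : j ∈ Finset.range (i + 1) := Finset.mem_range.mpr (by omega)
  have hsup_le : (Finset.range (i + 1)).sup' Finset.nonempty_range_add_one (f · y) ≤ g y :=
    Finset.sup'_le _ _ fun k _ => hle k y hy
  have hsup_ge := Finset.le_sup' (f · y) hj
  rw [Real.dist_eq, abs_of_nonneg (by linarith)]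
  linarith [hfδ j y hy hyj]

/-- Let `V : ℝⁿ → [0,∞)` be convex, absolutely homogeneous of degree one,
`(x_i)` a dense sequence in the unit sphere and `l_i ∈ ∂V(x_i)`. Then the polyhedral
functions `W_i(x) = max_{j ≤ i} |l_jᵀ x|` satisfy `W_i ≤ V` and converge to `V` uniformly
on the unit sphere. -/
theorem polyhedral_approx_of_dense {n : ℕ} (V : Vec n → ℝ)
    (hconv : ConvexOn ℝ univ V) (hhom : AbsHomog 1 V)
    (x : ℕ → Vec n)
    (hdense : ∀ y : Vec n, ‖y‖ = 1 → y ∈ closure (Set.range x))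
    (l : ℕ → Vec n) (hl : ∀ i, l i ∈ subdiff V (x i)) :
    (∀ (i : ℕ) (y : Vec n),
      ((Finset.range (i + 1)).sup' (by simp) fun j => |⟪l j, y⟫|) ≤ V y) ∧
    TendstoUniformlyOn
      (fun (i : ℕ) (y : Vec n) => (Finset.range (i + 1)).sup' (by simp) fun j => |⟪l j, y⟫|)
      V Filter.atTop (Metric.sphere (0 : Vec n) 1) := by
  rw [absHomog_one_iff] at hhom
  have hW_le (j : ℕ) (y : Vec n) : |⟪l j, y⟫| ≤ V y :=
    abs_inner_le_of_subgradient hhom (hl j) y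
  refine ⟨fun i y => Finset.sup'_le _ _ fun j _ => hW_le j y,
    tendstoUniformlyOn_sup'_range (isCompact_sphere 0 1)
      (fun y hy => hdense y (mem_sphere_zero_iff_norm.mp hy)) (fun j y _ => hW_le j y)
      fun ε hε => ?_⟩
  have hV0 : V 0 = 0 := by simpa using hhom 0 0
  have hcont : ContinuousAt V 0 :=
    (continuousOn_univ.mp (hconv.continuousOn isOpen_univ)).continuousAt
  obtain ⟨δ, hδ, hVδ⟩ := Metric.continuousAt_iff.mp hcont (ε / 2) (half_pos hε)
  refine ⟨δ, hδ, fun j y _ hyj => ?_⟩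
  have hsmall : V (y - x j) < ε / 2 := by
    have := hVδ (x := y - x j) (by rwa [dist_zero_right, ← dist_eq_norm])
    rw [Real.dist_eq, hV0, sub_zero] at this
    exact lt_of_abs_lt this
  calc V y - |⟪l j, y⟫| ≤ V y - ⟪l j, y⟫ := by linarith [le_abs_self ⟪l j, y⟫]
    _ ≤ 2 * V (y - x j) := sub_inner_le_of_subgradient hconv hhom (hl j) y
    _ < ε := by linarith
end
end
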